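/- arXiv:1501.00453 — 3 statements merged into one kernel-verified Lean document; each statement's English description precedes it below -/
import Mathlib

section
/- Let m ≥ 1 and let δ₁, …, δ_{m+1} ∈ {1,2} with δ_{m+1} = 1, and set n = ∑_{i=1}^{m+1} δ_i. Then for any positive reals a₁, …, a_{m+1} and s with sufficiently large real part, ∫₀^∞⋯∫₀^∞ (a₁² t₁² + ⋯ + a_m² t_m² + a_{m+1}² (t₁^{δ₁} ⋯ t_m^{δ_m})^{-2})^{-ns/2} (dt₁/t₁)⋯(dt_m/t_m) = (a₁^{δ₁} ⋯ a_{m+1}^{δ_{m+1}})^{-s} ∫₀^∞⋯∫₀^∞ (t₁² + ⋯ + t_m² + (t₁^{δ₁} ⋯ t_m^{δ_m})^{-2})^{-ns/2} (dt₁/t₁)⋯(dt_m/t_m). -/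
open MeasureTheory Real Set Finset

private lemma measurable_cpow_const' (e : ℂ) : Measurable fun x : ℂ => x ^ e := by
  have h : (fun x : ℂ => x ^ e)
      = fun x => if x = 0 then (if e = 0 then (1:ℂ) else 0)
        else Complex.exp (Complex.log x * e) := by
    funext x; simp [Complex.cpow_def]
  rw [h]
  exact Measurable.ite (measurableSet_eq) measurable_const
    ((Complex.measurable_log.mul measurable_const).cexp)

private lemma measurable_rpow_const' (y : ℝ) : Measurable fun x : ℝ => x ^ y := by
  have h : (fun x : ℝ => x ^ y) = fun x : ℝ => (((x:ℝ):ℂ) ^ ((y:ℝ):ℂ)).re := by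
    funext x; exact Real.rpow_def x y
  rw [h]
  exact Complex.measurable_re.comp ((measurable_cpow_const' y).comp Complex.measurable_ofReal)

private lemma scale_integral (m : ℕ) (lam : Fin m → ℝ) (hlam : ∀ i, 0 < lam i)
    (f : (Fin m → ℝ) → ℂ) (hf : Measurable f) :
    ∫ t in {t : Fin m → ℝ | ∀ i, 0 < t i}, f t
      = (∏ i, lam i) • ∫ u in {t : Fin m → ℝ | ∀ i, 0 < t i}, f (fun i => lam i * u i) := by
  classical
  set S := {t : Fin m → ℝ | ∀ i, 0 < t i} with hS
  have hSm : MeasurableSet S := by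
    have : S = Set.univ.pi fun _ : Fin m => Set.Ioi (0:ℝ) := by
      ext t; simp [hS, Set.mem_pi]
    rw [this]; exact MeasurableSet.univ_pi fun i => measurableSet_Ioi
  have hprodpos : 0 < ∏ i, lam i := Finset.prod_pos fun i _ => hlam i
  set M := Matrix.diagonal lam with hM
  have hdet : M.det = ∏ i, lam i := Matrix.det_diagonal
  have hmap : Measure.map (Matrix.toLin' M) volume
      = ENNReal.ofReal ((∏ i, lam i)⁻¹) • volume := by
    rw [Real.map_matrix_volume_pi_eq_smul_volume_pi (by rw [hdet]; exact hprodpos.ne'), hdet,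
      abs_of_pos (by positivity)]
  have hphi : ∀ u : Fin m → ℝ, Matrix.toLin' M u = fun i => lam i * u i := by
    intro u; funext i
    simp [hM, Matrix.toLin'_apply, Matrix.mulVec_diagonal]
  have hpre : (Matrix.toLin' M) ⁻¹' S = S := by
    ext u
    simp only [Set.mem_preimage, hS, Set.mem_setOf_eq, hphi]
    exact forall_congr' fun i => mul_pos_iff_of_pos_left (hlam i)
  have hmeasφ : AEMeasurable (Matrix.toLin' M) (volume : Measure (Fin m → ℝ)) :=
    ((Matrix.toLin' M).continuous_of_finiteDimensional.measurable).aemeasurable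
  have h1 : ∫ t in S, f t ∂(Measure.map (Matrix.toLin' M) volume)
      = ∫ u in S, f (fun i => lam i * u i) := by
    rw [setIntegral_map hSm hf.aestronglyMeasurable hmeasφ, hpre]
    exact setIntegral_congr_fun hSm fun u _ => by rw [hphi]
  have h2 : ∫ t in S, f t ∂(Measure.map (Matrix.toLin' M) volume)
      = (∏ i, lam i)⁻¹ • ∫ t in S, f t := by
    rw [hmap, Measure.restrict_smul, integral_smul_measure,
      ENNReal.toReal_ofReal (by positivity)]
  rw [← h1, h2, smul_smul, mul_inv_cancel₀ hprodpos.ne', one_smul]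

theorem hecke_integral_mixed_case (m : ℕ) (hm : 1 ≤ m) (δ : Fin (m+1) → ℕ)
    (hδ : ∀ i, δ i = 1 ∨ δ i = 2) (hδlast : δ (Fin.last m) = 1)
    (a : Fin (m+1) → ℝ) (ha : ∀ i, 0 < a i) :
    ∃ C : ℝ, ∀ s : ℂ, C < s.re →
      (∫ t in {t : Fin m → ℝ | ∀ i, 0 < t i},
        ((∑ i : Fin m, (a i.castSucc) ^ 2 * (t i) ^ 2
            + (a (Fin.last m)) ^ 2 * (∏ i : Fin m, (t i) ^ (δ i.castSucc)) ^ (-2 : ℝ) : ℝ) : ℂ)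
          ^ (-((∑ i, δ i : ℕ) : ℂ) * s / 2) * ((∏ i, (t i)⁻¹ : ℝ) : ℂ))
      = ((∏ i : Fin (m+1), (a i) ^ (δ i) : ℝ) : ℂ) ^ (-s) *
        ∫ t in {t : Fin m → ℝ | ∀ i, 0 < t i},
          ((∑ i : Fin m, (t i) ^ 2 + (∏ i : Fin m, (t i) ^ (δ i.castSucc)) ^ (-2 : ℝ) : ℝ) : ℂ)
            ^ (-((∑ i, δ i : ℕ) : ℂ) * s / 2) * ((∏ i, (t i)⁻¹ : ℝ) : ℂ) := by
  classical
  refine ⟨0, fun s _ => ?_⟩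
  set n : ℕ := ∑ i, δ i with hn
  set e : ℂ := -((n : ℕ) : ℂ) * s / 2 with he
  set A : ℝ := ∏ i, a i ^ δ i with hA
  have hApos : 0 < A := Finset.prod_pos fun i _ => pow_pos (ha i) _
  have hnpos : 0 < n := by
    rw [hn, Fin.sum_univ_castSucc, hδlast]
    omega
  set c : ℝ := A ^ ((n : ℝ)⁻¹) with hc
  have hcpos : 0 < c := Real.rpow_pos_of_pos hApos _
  have hcn : c ^ n = A := by
    rw [hc, ← Real.rpow_natCast (A ^ ((n:ℝ)⁻¹)) n, ← Real.rpow_mul hApos.le,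
      inv_mul_cancel₀ (by exact_mod_cast hnpos.ne'), Real.rpow_one]
  set lam : Fin m → ℝ := fun i => c / a i.castSucc with hlam
  have hlampos : ∀ i, 0 < lam i := fun i => div_pos hcpos (ha _)
  set L : ℝ := ∏ i, lam i with hL
  have hLpos : 0 < L := Finset.prod_pos fun i _ => hlampos i
  set S := {t : Fin m → ℝ | ∀ i, 0 < t i} with hS
  have hSm : MeasurableSet S := by
    have : S = Set.univ.pi fun _ : Fin m => Set.Ioi (0:ℝ) := by
      ext t; simp [hS, Set.mem_pi]
    rw [this]; exact MeasurableSet.univ_pi fun i => measurableSet_Ioi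
  -- measurability of LHS integrand
  have hmeas : Measurable (fun t : Fin m → ℝ =>
      ((∑ i : Fin m, (a i.castSucc) ^ 2 * (t i) ^ 2
          + (a (Fin.last m)) ^ 2 * (∏ i : Fin m, (t i) ^ (δ i.castSucc)) ^ (-2 : ℝ) : ℝ) : ℂ)
        ^ e * ((∏ i, (t i)⁻¹ : ℝ) : ℂ)) := by
    apply Measurable.mul
    · apply (measurable_cpow_const' e).comp
      apply Complex.measurable_ofReal.comp
      apply Measurable.add
      · exact Finset.measurable_sum _ fun i _ =>
          (measurable_const.mul ((measurable_pi_apply i).pow measurable_const))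
      · exact measurable_const.mul
          ((measurable_rpow_const' (-2)).comp (Finset.measurable_prod _ fun i _ =>
            ((measurable_pi_apply i).pow measurable_const)))
    · exact Complex.measurable_ofReal.comp
        (Finset.measurable_prod _ fun i _ => (measurable_pi_apply i).inv)
  -- key constant identity
  have hΛ : ∀ i : Fin m, a i.castSucc * lam i = c := fun i => by
    rw [hlam, mul_div_cancel₀ _ (ha i.castSucc).ne']
  set Λ : ℝ := ∏ i : Fin m, lam i ^ δ i.castSucc with hΛdef
  have hΛpos : 0 < Λ := Finset.prod_pos fun i _ => pow_pos (hlampos i) _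
  have hkey : a (Fin.last m) = c * Λ := by
    have hD : n = (∑ i : Fin m, δ i.castSucc) + 1 := by
      rw [hn, Fin.sum_univ_castSucc, hδlast]
    have hAsplit : A = (∏ i : Fin m, a i.castSucc ^ δ i.castSucc) * a (Fin.last m) := by
      rw [hA, Fin.prod_univ_castSucc, hδlast, pow_one]
    have hΛeq : Λ = c ^ (∑ i : Fin m, δ i.castSucc) / ∏ i : Fin m, a i.castSucc ^ δ i.castSucc := by
      rw [hΛdef, ← Finset.prod_pow_eq_pow_sum, ← Finset.prod_div_distrib]
      exact Finset.prod_congr rfl fun i _ => by rw [hlam, div_pow]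
    have hprodapos : 0 < ∏ i : Fin m, a i.castSucc ^ δ i.castSucc :=
      Finset.prod_pos fun i _ => pow_pos (ha _) _
    have h1 : (c * Λ) * ∏ i : Fin m, a i.castSucc ^ δ i.castSucc = c ^ n := by
      rw [hΛeq, eq_div_iff hprodapos.ne'] at *
      rw [mul_assoc, hΛeq, hD, pow_succ, mul_comm]
    have h2 : a (Fin.last m) * ∏ i : Fin m, a i.castSucc ^ δ i.castSucc
        = (c * Λ) * ∏ i : Fin m, a i.castSucc ^ δ i.castSucc := by
      rw [h1, hcn, hAsplit]; ring
    exact mul_right_cancel₀ hprodapos.ne' h2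
  -- the cpow constant identity
  have hcpow : ((c ^ 2 : ℝ) : ℂ) ^ e = (A : ℂ) ^ (-s) := by
    rw [Complex.cpow_def_of_ne_zero (by exact_mod_cast (pow_pos hcpos 2).ne'),
      Complex.cpow_def_of_ne_zero (by exact_mod_cast hApos.ne')]
    congr 1
    rw [← Complex.ofReal_log (pow_pos hcpos 2).le, ← Complex.ofReal_log hApos.le,
      ← hcn, Real.log_pow, Real.log_pow, he]
    push_cast
    ring
  -- pointwise identity on S
  have hpt : ∀ u ∈ S,
      ((∑ i : Fin m, (a i.castSucc) ^ 2 * (lam i * u i) ^ 2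
          + (a (Fin.last m)) ^ 2 * (∏ i : Fin m, (lam i * u i) ^ (δ i.castSucc)) ^ (-2 : ℝ) : ℝ) : ℂ)
        ^ e * ((∏ i, (lam i * u i)⁻¹ : ℝ) : ℂ)
      = ((A : ℂ) ^ (-s) * (L : ℂ)⁻¹) *
        (((∑ i : Fin m, (u i) ^ 2 + (∏ i : Fin m, (u i) ^ (δ i.castSucc)) ^ (-2 : ℝ) : ℝ) : ℂ)
          ^ e * ((∏ i, (u i)⁻¹ : ℝ) : ℂ)) := by
    intro u hu
    have hupos : ∀ i, 0 < u i := hu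
    set P : ℝ := ∏ i : Fin m, (u i) ^ (δ i.castSucc) with hP
    have hPpos : 0 < P := Finset.prod_pos fun i _ => pow_pos (hupos i) _
    have hR : 0 < ∑ i : Fin m, (u i) ^ 2 + P ^ (-2 : ℝ) :=
      add_pos_of_nonneg_of_pos (Finset.sum_nonneg fun i _ => sq_nonneg _)
        (Real.rpow_pos_of_pos hPpos _)
    have hsum : ∑ i : Fin m, (a i.castSucc) ^ 2 * (lam i * u i) ^ 2
        = c ^ 2 * ∑ i : Fin m, (u i) ^ 2 := by
      rw [Finset.mul_sum]
      refine Finset.sum_congr rfl fun i _ => ?_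
      rw [← hΛ i]; ring
    have hprodsplit : ∏ i : Fin m, (lam i * u i) ^ (δ i.castSucc) = Λ * P := by
      rw [hΛdef, hP, ← Finset.prod_mul_distrib]
      exact Finset.prod_congr rfl fun i _ => mul_pow _ _ _
    have hterm : (a (Fin.last m)) ^ 2 * (∏ i : Fin m, (lam i * u i) ^ (δ i.castSucc)) ^ (-2 : ℝ)
        = c ^ 2 * P ^ (-2 : ℝ) := by
      rw [hprodsplit, Real.mul_rpow hΛpos.le hPpos.le, hkey]
      have hΛr : Λ ^ (-2 : ℝ) = (Λ ^ 2)⁻¹ := by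
        rw [show (-2 : ℝ) = -((2:ℕ):ℝ) by norm_num, Real.rpow_neg hΛpos.le,
          Real.rpow_natCast]
      rw [hΛr, mul_pow]
      field_simp
    have hprodinv : (∏ i, (lam i * u i)⁻¹ : ℝ) = L⁻¹ * ∏ i, (u i)⁻¹ := by
      rw [hL, ← Finset.prod_inv_distrib, ← Finset.prod_mul_distrib]
      exact Finset.prod_congr rfl fun i _ => mul_inv _ _
    rw [hsum, hterm, ← mul_add, hprodinv]
    rw [Complex.ofReal_mul, Complex.mul_cpow_ofReal_nonneg (sq_nonneg c) hR.le, hcpow]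
    push_cast
    ring
  -- apply scaling
  rw [scale_integral m lam hlampos _ hmeas]
  have : (∫ u in S, (fun t : Fin m → ℝ =>
      ((∑ i : Fin m, (a i.castSucc) ^ 2 * (t i) ^ 2
          + (a (Fin.last m)) ^ 2 * (∏ i : Fin m, (t i) ^ (δ i.castSucc)) ^ (-2 : ℝ) : ℝ) : ℂ)
        ^ e * ((∏ i, (t i)⁻¹ : ℝ) : ℂ)) (fun i => lam i * u i))
      = ∫ u in S, ((A : ℂ) ^ (-s) * (L : ℂ)⁻¹) *
        (((∑ i : Fin m, (u i) ^ 2 + (∏ i : Fin m, (u i) ^ (δ i.castSucc)) ^ (-2 : ℝ) : ℝ) : ℂ)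
          ^ e * ((∏ i, (u i)⁻¹ : ℝ) : ℂ)) :=
    setIntegral_congr_fun hSm fun u hu => hpt u hu
  rw [this, integral_const_mul, Complex.real_smul]
  have hLne : ((L:ℝ):ℂ) ≠ 0 := Complex.ofReal_ne_zero.mpr hLpos.ne'
  field_simp
  rw [hL]
  push_cast
  ring
end

section
/- Let y > 0 and n ≥ 2 an integer. Then the function S'₂(s) := ∑_{m₁ ∈ ℤ, m₁ ≠ 0} ∫₀^∞ exp(-π (m₁ y)² t) t^{n(s-1)/2 + 1/2} (dt/t), which equals 2 y^{-(n(s-1)+1)} π^{-(n(s-1)/2 + 1/2)} Γ(n(s-1)/2 + 1/2) ζ(n(s-1)+1) for Re(s) > 1, has the Laurent expansion 2 y^{-(n(s-1)+1)} π^{-(n(s-1)/2+1/2)} Γ(n(s-1)/2+1/2) ζ(n(s-1)+1) = (1/y)[ (2/n)/(s-1) + (γ - log(4π) - 2 log y) ] + O(s-1) as s → 1. -/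
open MeasureTheory Real Set Filter Topology


lemma S2aux_int {w u : ℂ} (hwre : 0 < w.re) (hww : -w + -w = -u) {x y : ℝ} (hx : 0 < x) (hy : 0 < y) :
    ∫ t in Ioi (0:ℝ), (t:ℂ)^(w-1) * Complex.exp (-((Real.pi * (x*y)^2 : ℝ) * t)) =
      (Real.pi:ℂ)^(-w) * Complex.Gamma w * (x:ℂ)^(-u) * (y:ℂ)^(-u) := by
  have hr : 0 < Real.pi * (x*y)^2 := by positivity
  rw [Complex.integral_cpow_mul_exp_neg_mul_Ioi hwre hr]
  have harg : ((Real.pi * (x*y)^2 : ℝ) : ℂ).arg ≠ Real.pi := by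
    rw [Complex.arg_ofReal_of_nonneg hr.le]
    exact Real.pi_ne_zero.symm
  rw [one_div, Complex.inv_cpow _ _ harg, ← Complex.cpow_neg]
  have h1 : ((Real.pi * (x*y)^2 : ℝ) : ℂ) = (Real.pi : ℂ) * ((x*y : ℝ):ℂ) * ((x*y : ℝ):ℂ) := by
    push_cast; ring
  rw [h1, mul_assoc, ← Complex.ofReal_mul,
    Complex.mul_cpow_ofReal_nonneg Real.pi_pos.le (by positivity : (0:ℝ) ≤ (x*y) * (x*y)),
    Complex.ofReal_mul, Complex.mul_cpow_ofReal_nonneg (by positivity : (0:ℝ) ≤ x*y) (by positivity : (0:ℝ) ≤ x*y),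
    ← Complex.cpow_add _ _ (Complex.ofReal_ne_zero.mpr (by positivity)), hww,
    Complex.ofReal_mul, Complex.mul_cpow_ofReal_nonneg hx.le hy.le]
  ring

lemma S2aux_sum {u : ℂ} (hu : 1 < u.re) (c : ℂ) :
    HasSum (fun m : {m : ℤ // m ≠ 0} => c * ((|(m.1 : ℝ)| : ℝ) : ℂ)^(-u))
      (c * riemannZeta u + c * riemannZeta u) := by
  have hu0 : u ≠ 0 := by
    intro h
    rw [h] at hu
    norm_num [Complex.zero_re] at hu
  have hζ : HasSum (fun k : ℕ => 1/(k:ℂ)^u) (riemannZeta u) := by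
    have hsum := (Complex.summable_one_div_nat_cpow (p := u)).mpr hu
    have := hsum.hasSum
    rwa [← zeta_eq_tsum_one_div_nat_cpow hu] at this
  set f : ℤ → ℂ := fun m => if m = 0 then 0 else c * ((|(m : ℝ)| : ℝ):ℂ)^(-u) with hf
  have hpos : HasSum (fun k : ℕ => f k) (c * riemannZeta u) := by
    refine (hζ.mul_left c).congr_fun fun k => ?_
    rcases eq_or_ne k 0 with rfl | hk
    · simp [hf, Complex.zero_cpow hu0]
    · have habs : |((k:ℤ):ℝ)| = ((k:ℕ):ℝ) := by
        push_cast
        exact abs_of_nonneg (by positivity)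
      simp only [hf, Int.natCast_eq_zero, hk, if_false, habs]
      rw [Complex.cpow_neg, one_div]
      push_cast
      ring
  have hneg : HasSum (fun k : ℕ => f (-(k+1))) (c * riemannZeta u) := by
    have h1 := (hasSum_nat_add_iff' (f := fun k : ℕ => 1/(k:ℂ)^u) 1).mpr hζ
    simp only [Finset.range_one, Finset.sum_singleton, Nat.cast_zero,
      Complex.zero_cpow hu0, div_zero, sub_zero] at h1
    refine (h1.mul_left c).congr_fun fun k => ?_
    have hk : (-(k+1) : ℤ) ≠ 0 := by omega
    have : |((-(k+1) : ℤ) : ℝ)| = ((k:ℝ)+1) := by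
      push_cast
      rw [abs_neg, abs_of_nonneg (by positivity)]
    simp only [hf, hk, if_false, this]
    rw [Complex.cpow_neg, one_div]
    push_cast
    ring
  have total := hpos.of_nat_of_neg_add_one hneg
  have h0 : ∀ x ∉ Set.range (Subtype.val : {m : ℤ // m ≠ 0} → ℤ), f x = 0 := by
    intro x hx
    have : x = 0 := by
      by_contra h
      exact hx ⟨⟨x, h⟩, rfl⟩
    simp [hf, this]
  have := (Function.Injective.hasSum_iff Subtype.val_injective h0).mpr total
  refine this.congr_fun fun m => ?_
  simp [hf, m.2]

lemma S2_part1 (y : ℝ) (hy : 0 < y) (n : ℕ) (hn : 2 ≤ n) (s : ℂ) (hs : 1 < s.re) :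
      ∑' m : {m : ℤ // m ≠ 0},
          ∫ t in Ioi (0:ℝ), Complex.exp (-(Real.pi * ((m.1 : ℝ) * y) ^ 2 * t)) *
            (t : ℂ) ^ ((n : ℂ) * (s - 1) / 2 + 1/2 - 1)
        = 2 * (y : ℂ) ^ (-((n : ℂ) * (s - 1) + 1)) *
            (Real.pi : ℂ) ^ (-((n : ℂ) * (s - 1) / 2 + 1/2)) *
            Complex.Gamma ((n : ℂ) * (s - 1) / 2 + 1/2) *
            riemannZeta ((n : ℂ) * (s - 1) + 1) := by
  set w : ℂ := (n : ℂ) * (s - 1) / 2 + 1/2 with hw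
  set u : ℂ := (n : ℂ) * (s - 1) + 1 with hu
  have hnre : ((n:ℂ) * (s-1)).re = n * (s.re - 1) := by simp [Complex.mul_re]
  have hn2 : (2:ℝ) ≤ (n:ℝ) := by exact_mod_cast hn
  have hure : 1 < u.re := by
    rw [hu]
    simp only [Complex.add_re, Complex.one_re, hnre]
    nlinarith
  have hwre : 0 < w.re := by
    have h2 : w.re = (n * (s.re - 1))/2 + 1/2 := by
      rw [hw]
      simp [Complex.add_re, Complex.div_re, hnre]
    rw [h2]
    nlinarith
  have hww : -w + -w = -u := by rw [hw, hu]; ring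
  have hterm : ∀ m : {m : ℤ // m ≠ 0},
      (∫ t in Ioi (0:ℝ), Complex.exp (-(Real.pi * ((m.1 : ℝ) * y) ^ 2 * t)) *
        (t : ℂ) ^ (w - 1))
      = ((Real.pi:ℂ)^(-w) * Complex.Gamma w * (y:ℂ)^(-u)) * ((|(m.1 : ℝ)| : ℝ) : ℂ)^(-u) := by
    intro m
    have hm : (0:ℝ) < |(m.1 : ℝ)| := by
      have : ((m.1 : ℝ)) ≠ 0 := Int.cast_ne_zero.mpr m.2
      positivity
    have heq : ∀ t ∈ Ioi (0:ℝ), Complex.exp (-(Real.pi * ((m.1 : ℝ) * y) ^ 2 * t)) *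
          (t : ℂ) ^ (w - 1)
        = (t:ℂ)^(w-1) * Complex.exp (-((Real.pi * (|(m.1 : ℝ)| * y)^2 : ℝ) * t)) := by
      intro t _
      rw [mul_comm]
      congr 2
      have : (|(m.1 : ℝ)| * y)^2 = ((m.1 : ℝ) * y)^2 := by
        rw [mul_pow, mul_pow, sq_abs]
      rw [this]
      push_cast
      ring
    rw [MeasureTheory.setIntegral_congr_fun measurableSet_Ioi heq,
      S2aux_int hwre hww hm hy]
    ring
  rw [tsum_congr hterm, ((S2aux_sum hure
      ((Real.pi:ℂ)^(-w) * Complex.Gamma w * (y:ℂ)^(-u)))).tsum_eq]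
  ring


lemma S2_part2 (y : ℝ) (hy : 0 < y) (n : ℕ) (hn : 2 ≤ n) :
    Tendsto (fun s : ℂ =>
        2 * (y : ℂ) ^ (-((n : ℂ) * (s - 1) + 1)) *
          (Real.pi : ℂ) ^ (-((n : ℂ) * (s - 1) / 2 + 1/2)) *
          Complex.Gamma ((n : ℂ) * (s - 1) / 2 + 1/2) *
          riemannZeta ((n : ℂ) * (s - 1) + 1)
        - (1 / (y : ℂ)) * ((2 / (n : ℂ)) / (s - 1)))
      (𝓝[≠] 1)
      (𝓝 ((1 / (y : ℂ)) * ((Real.eulerMascheroniConstant : ℂ)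
          - Real.log (4 * Real.pi) - 2 * Real.log y))) := by
  have hn0 : (n:ℂ) ≠ 0 := Nat.cast_ne_zero.mpr (by omega)
  have hyc : (y:ℂ) ≠ 0 := Complex.ofReal_ne_zero.mpr hy.ne'
  set u : ℂ → ℂ := fun s => (n:ℂ) * (s - 1) + 1 with hu
  set h : ℂ → ℂ := fun s => 2 * (y:ℂ)^(-(u s)) * Complex.Gammaℝ (u s) with hh
  have hu1 : u 1 = 1 := by simp [hu]
  have hexpr : ∀ s : ℂ,
      2 * (y : ℂ) ^ (-((n : ℂ) * (s - 1) + 1)) *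
          (Real.pi : ℂ) ^ (-((n : ℂ) * (s - 1) / 2 + 1/2)) *
          Complex.Gamma ((n : ℂ) * (s - 1) / 2 + 1/2) *
          riemannZeta ((n : ℂ) * (s - 1) + 1)
        = h s * riemannZeta (u s) := by
    intro s
    have e1 : -((n:ℂ)*(s-1)/2 + 1/2) = -(u s)/2 := by rw [hu]; ring
    have e2 : (n:ℂ)*(s-1)/2 + 1/2 = (u s)/2 := by rw [hu]; ring
    rw [e1, e2, hh]
    simp only [Complex.Gammaℝ_def]
    ring
  -- derivative facts
  have hud : HasDerivAt u (n:ℂ) 1 := by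
    have := (((hasDerivAt_id (1:ℂ)).sub_const 1).const_mul ((n:ℂ))).add_const 1
    simpa [hu] using this
  have hA : HasDerivAt (fun s => (y:ℂ)^(-(u s)))
      ((y:ℂ)^(-(u 1)) * Complex.log y * (-(n:ℂ))) 1 :=
    (hud.neg).const_cpow (c := (y:ℂ)) (Or.inl hyc)
  have hB : HasDerivAt (fun s => Complex.Gammaℝ (u s))
      ((-((Real.eulerMascheroniConstant:ℂ) + Complex.log (4*Real.pi))/2) * (n:ℂ)) 1 := by
    have hg : HasDerivAt Complex.Gammaℝ
        (-((Real.eulerMascheroniConstant:ℂ) + Complex.log (4*Real.pi))/2) (u 1) := by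
      rw [hu1]; exact Complex.hasDerivAt_Gammaℝ_one
    exact hg.comp 1 hud
  set D : ℂ := 2 * (((y:ℂ)^(-(u 1)) * Complex.log y * (-(n:ℂ))) * Complex.Gammaℝ (u 1)
      + (y:ℂ)^(-(u 1)) * ((-((Real.eulerMascheroniConstant:ℂ)
        + Complex.log (4*Real.pi))/2) * (n:ℂ))) with hD
  have hhd : HasDerivAt h D 1 := by
    have H := (hA.mul hB).const_mul 2
    have hfun : h = fun s => 2 * ((y:ℂ)^(-(u s)) * Complex.Gammaℝ (u s)) := by
      funext s; rw [hh]; ring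
    rw [hfun, hD]
    exact H
  have h1v : h 1 = 2 * (y:ℂ)⁻¹ := by
    simp only [hh]
    rw [hu1]
    simp [Complex.cpow_neg_one]
  -- u tends to punctured nbhd
  have hu_t : Tendsto u (𝓝[≠] (1:ℂ)) (𝓝[≠] (1:ℂ)) := by
    rw [tendsto_nhdsWithin_iff]
    constructor
    · exact (hu1 ▸ hud.continuousAt.tendsto).mono_left nhdsWithin_le_nhds
    · filter_upwards [self_mem_nhdsWithin] with s hs
      have hs' : s ≠ (1:ℂ) := hs
      show u s ∈ ({(1:ℂ)}ᶜ : Set ℂ)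
      simp only [Set.mem_compl_iff, Set.mem_singleton_iff, hu]
      intro hcon
      apply hs'
      have h2 : (n:ℂ) * (s-1) = 0 := by linear_combination hcon
      rcases mul_eq_zero.mp h2 with h3 | h3
      · exact absurd h3 hn0
      · linear_combination h3
  have T1 : Tendsto (fun s => h s * (riemannZeta (u s) - 1/(u s - 1))) (𝓝[≠] (1:ℂ))
      (𝓝 (h 1 * (Real.eulerMascheroniConstant : ℂ))) :=
    ((hhd.continuousAt.tendsto).mono_left nhdsWithin_le_nhds).mul
      (tendsto_riemannZeta_sub_one_div.comp hu_t)
  have T2 : Tendsto (fun s => (h s - h 1) / (s - 1) * ((n:ℂ))⁻¹) (𝓝[≠] (1:ℂ))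
      (𝓝 (D * ((n:ℂ))⁻¹)) := by
    have H1 := (hasDerivAt_iff_tendsto_slope.mp hhd).mul_const ((n:ℂ))⁻¹
    refine H1.congr fun s => ?_
    rw [slope_def_field]
  have heq : ∀ᶠ s in 𝓝[≠] (1:ℂ),
      h s * (riemannZeta (u s) - 1/(u s - 1)) + (h s - h 1)/(s-1) * ((n:ℂ))⁻¹
      = h s * riemannZeta (u s) - (1/(y:ℂ)) * ((2/(n:ℂ))/(s-1)) := by
    filter_upwards [self_mem_nhdsWithin] with s hs
    have hs1 : s - (1:ℂ) ≠ 0 := sub_ne_zero.mpr hs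
    have hu_ne : u s - 1 = (n:ℂ) * (s - 1) := by rw [hu]; ring
    rw [hu_ne, h1v]
    field_simp
    ring
  have hlim : h 1 * (Real.eulerMascheroniConstant : ℂ) + D * ((n:ℂ))⁻¹
      = (1 / (y : ℂ)) * ((Real.eulerMascheroniConstant : ℂ)
          - Real.log (4 * Real.pi) - 2 * Real.log y) := by
    have hly : Complex.log (y:ℂ) = ((Real.log y : ℝ) : ℂ) := (Complex.ofReal_log hy.le).symm
    have hlp : Complex.log (4*(Real.pi:ℂ)) = ((Real.log (4*Real.pi) : ℝ) : ℂ) := by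
      rw [show (4:ℂ) * (Real.pi:ℂ) = ((4*Real.pi : ℝ):ℂ) by push_cast; ring,
        ← Complex.ofReal_log (by positivity : (0:ℝ) ≤ 4*Real.pi)]
    rw [h1v, hD, hu1, Complex.Gammaℝ_one, Complex.cpow_neg_one, hly, hlp]
    have hnn : (n:ℂ) * ((n:ℂ))⁻¹ = 1 := mul_inv_cancel₀ hn0
    linear_combination (-2*(y:ℂ)⁻¹*((Real.log y : ℝ):ℂ)
      - (y:ℂ)⁻¹*((Real.eulerMascheroniConstant:ℂ) + ((Real.log (4*Real.pi) : ℝ):ℂ))) * hnn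
  have hfun2 : (fun s : ℂ =>
        2 * (y : ℂ) ^ (-((n : ℂ) * (s - 1) + 1)) *
          (Real.pi : ℂ) ^ (-((n : ℂ) * (s - 1) / 2 + 1/2)) *
          Complex.Gamma ((n : ℂ) * (s - 1) / 2 + 1/2) *
          riemannZeta ((n : ℂ) * (s - 1) + 1)
        - (1 / (y : ℂ)) * ((2 / (n : ℂ)) / (s - 1)))
      = fun s => h s * riemannZeta (u s) - (1/(y:ℂ)) * ((2/(n:ℂ))/(s-1)) := by
    funext s
    rw [hexpr s]
  rw [hfun2, ← hlim]
  exact (T1.add T2).congr' heq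

theorem S2prime_laurent (y : ℝ) (hy : 0 < y) (n : ℕ) (hn : 2 ≤ n) :
    (∀ s : ℂ, 1 < s.re →
      ∑' m : {m : ℤ // m ≠ 0},
          ∫ t in Ioi (0:ℝ), Complex.exp (-(Real.pi * ((m.1 : ℝ) * y) ^ 2 * t)) *
            (t : ℂ) ^ ((n : ℂ) * (s - 1) / 2 + 1/2 - 1)
        = 2 * (y : ℂ) ^ (-((n : ℂ) * (s - 1) + 1)) *
            (Real.pi : ℂ) ^ (-((n : ℂ) * (s - 1) / 2 + 1/2)) *
            Complex.Gamma ((n : ℂ) * (s - 1) / 2 + 1/2) *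
            riemannZeta ((n : ℂ) * (s - 1) + 1)) ∧
    Tendsto (fun s : ℂ =>
        2 * (y : ℂ) ^ (-((n : ℂ) * (s - 1) + 1)) *
          (Real.pi : ℂ) ^ (-((n : ℂ) * (s - 1) / 2 + 1/2)) *
          Complex.Gamma ((n : ℂ) * (s - 1) / 2 + 1/2) *
          riemannZeta ((n : ℂ) * (s - 1) + 1)
        - (1 / (y : ℂ)) * ((2 / (n : ℂ)) / (s - 1)))
      (𝓝[≠] 1)
      (𝓝 ((1 / (y : ℂ)) * ((Real.eulerMascheroniConstant : ℂ)
          - Real.log (4 * Real.pi) - 2 * Real.log y))) := by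
  exact ⟨fun s hs => S2_part1 y hy n hn s hs, S2_part2 y hy n hn⟩
end

section
/- Let n ≥ 2, τ ∈ ℌⁿ, and let τ' be τ with its topmost row and leftmost column removed, and let y₁, …, y_{n-1} be the positive reals with τ_{n-i,n-i} = ∏_{j=1}^{i} y_j for i ≥ 1. Then for Re(s) > 1, ∑_{(m₂,…,m_n) ≠ 0} (det τ)^s / ‖(m₂ … m_n)τ'‖^{ns/2} = (∏_{i=1}^{n-1} y_i^{i/(n-1)})^s · E'_{n-1}(τ', (n/(n-1)) s), where E'_{n-1}(τ', w) = ∑_{(m₂,…,m_n) ≠ 0} (det τ')^w / ‖(m₂…m_n)τ'‖^{(n-1)w/2}. -/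
/-!
Both determinants are products of diagonal entries, hence monomials in the `y j`:
`det τ = ∏ y_j ^ (n - j)` and `det τ' = ∏ y_j ^ (n - 1 - j)` (0-based `j`). Comparing exponents,
`det τ = (∏ y_j ^ ((j + 1) / n)) * (det τ') ^ ((n + 1) / n)`, and since
`n * ((n + 1) / n * s) / 2 = (n + 1) * s / 2` the two series agree term by term.
-/

open Finset

namespace Fin

variable {M : Type*} [CommMonoid M] {n : ℕ}

theorem prod_prod_Iic_eq_prod_pow (f : Fin n → M) :
    ∏ i, ∏ j ∈ Iic i, f j = ∏ j, f j ^ (n - j) := by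
  rw [prod_comm' (t' := univ) (s' := Ici) (by simp)]
  simp only [Finset.prod_const, card_Ici]

theorem prod_pow_sub_eq_prod_mul_prod_pow_sub_one (f : Fin n → M) :
    ∏ j, f j ^ (n - j) = (∏ j, f j) * ∏ j, f j ^ (n - 1 - j) := by
  rw [← prod_mul_distrib]
  refine prod_congr rfl fun j _ => ?_
  rw [← pow_succ', show n - 1 - j + 1 = n - j by omega]

variable {d : Fin (n + 1) → M} {f : Fin n → M}

theorem prod_eq_prod_pow_of_apply_rev_castSucc (hlast : d (last n) = 1)
    (hd : ∀ i, d i.rev.castSucc = ∏ j ∈ Iic i, f j) :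
    ∏ i, d i = ∏ j, f j ^ (n - j) := by
  rw [prod_univ_castSucc, hlast, mul_one, ← Equiv.prod_comp revPerm]
  simp only [revPerm_apply, hd, prod_prod_Iic_eq_prod_pow]

theorem apply_zero_eq_prod_of_apply_rev_castSucc (hn : 0 < n)
    (hd : ∀ i, d i.rev.castSucc = ∏ j ∈ Iic i, f j) :
    d 0 = ∏ j, f j := by
  have h := hd ⟨n - 1, by omega⟩
  rwa [show (rev ⟨n - 1, _⟩ : Fin n).castSucc = 0 by ext; simp; omega,
    show Iic (⟨n - 1, _⟩ : Fin n) = univ by ext j; simp [Fin.le_def]; omega] at h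

end Fin

theorem Matrix.det_succ_of_column_zero {R : Type*} [CommRing R] {n : ℕ}
    (A : Matrix (Fin (n + 1)) (Fin (n + 1)) R) (h : ∀ i : Fin n, A i.succ 0 = 0) :
    A.det = A 0 0 * (A.submatrix Fin.succ Fin.succ).det := by
  simp [Matrix.det_succ_column_zero A, Fin.sum_univ_succ, h]

theorem Complex.ofReal_mul_rpow_cpow {a b : ℝ} (ha : 0 ≤ a) (hb : 0 ≤ b) (r : ℝ) (s : ℂ) :
    ((a * b ^ r : ℝ) : ℂ) ^ s = (a : ℂ) ^ s * (b : ℂ) ^ ((r : ℂ) * s) := by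
  rw [Complex.ofReal_mul, Complex.mul_cpow_ofReal_nonneg ha (Real.rpow_nonneg hb r),
    Complex.cpow_mul_ofReal_nonneg hb]

theorem Real.pow_sub_eq_rpow_mul_rpow {n : ℕ} (hn : 0 < n) {x : ℝ} (hx : 0 < x) {j : ℕ} (hj : j < n) :
    x ^ (n - j) = x ^ (((j : ℝ) + 1) / n) * (x ^ (n - 1 - j)) ^ (((n : ℝ) + 1) / n) := by
  rw [← Real.rpow_natCast, ← Real.rpow_natCast, ← Real.rpow_mul hx.le, ← Real.rpow_add hx,
    Nat.cast_sub hj.le, Nat.cast_sub (by omega : j ≤ n - 1), Nat.cast_sub hn]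
  congr 1
  field_simp
  push_cast
  ring

theorem eisenstein_m1_zero_term (n : ℕ) (hn : 1 ≤ n)
    (τ : Matrix (Fin (n+1)) (Fin (n+1)) ℝ)
    (hupper : ∀ i j : Fin (n+1), j < i → τ i j = 0)
    (hlast : τ (Fin.last n) (Fin.last n) = 1)
    (y : Fin n → ℝ) (hy : ∀ i, 0 < y i)
    (hyrel : ∀ i : Fin n,
      τ ⟨n - 1 - (i : ℕ), by omega⟩ ⟨n - 1 - (i : ℕ), by omega⟩
        = ∏ j ∈ Finset.Iic i, y j)
    (τ' : Matrix (Fin n) (Fin n) ℝ)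
    (hτ' : ∀ i j : Fin n, τ' i j = τ i.succ j.succ)
    (s : ℂ) :
    ∑' m : {v : Fin n → ℤ // v ≠ 0},
        (τ.det : ℂ) ^ s /
          ((Real.sqrt (∑ j : Fin n, (∑ i : Fin n, (m.1 i : ℝ) * τ' i j) ^ 2) : ℝ) : ℂ)
            ^ (((n : ℂ) + 1) * s / 2)
      = ((∏ i : Fin n, y i ^ ((((i : ℕ) : ℝ) + 1) / n) : ℝ) : ℂ) ^ s *
        ∑' m : {v : Fin n → ℤ // v ≠ 0},
          (τ'.det : ℂ) ^ ((((n : ℂ) + 1) / (n : ℂ)) * s) /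
            ((Real.sqrt (∑ j : Fin n, (∑ i : Fin n, (m.1 i : ℝ) * τ' i j) ^ 2) : ℝ) : ℂ)
              ^ ((n : ℂ) * ((((n : ℂ) + 1) / (n : ℂ)) * s) / 2) := by
  have hτ_diag : ∀ i : Fin n, τ i.rev.castSucc i.rev.castSucc = ∏ j ∈ Iic i, y j := fun i => by
    convert hyrel i using 2 <;> ext <;> simp [Fin.rev] <;> omega
  have hdetτ : τ.det = ∏ j, y j ^ (n - j) := by
    rw [Matrix.det_of_isUpperTriangular hupper]
    exact Fin.prod_eq_prod_pow_of_apply_rev_castSucc (d := fun i => τ i i) hlast hτ_diag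
  have hdetτ' : τ'.det = ∏ j, y j ^ (n - 1 - j) := by
    have h := Matrix.det_succ_of_column_zero τ fun i => hupper _ _ i.succ_pos
    rw [show τ.submatrix Fin.succ Fin.succ = τ' from Matrix.ext fun i j => (hτ' i j).symm, hdetτ,
      Fin.prod_pow_sub_eq_prod_mul_prod_pow_sub_one,
      Fin.apply_zero_eq_prod_of_apply_rev_castSucc (d := fun i => τ i i) hn hτ_diag] at h
    exact (mul_left_cancel₀ (prod_pos fun j _ => hy j).ne' h).symm
  set P := ∏ i : Fin n, y i ^ ((((i : ℕ) : ℝ) + 1) / n)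
  have hdet : τ.det = P * τ'.det ^ (((n : ℝ) + 1) / n) := by
    rw [hdetτ, hdetτ', ← Real.finsetProd_rpow _ _ fun j _ => (pow_pos (hy j) _).le,
      ← prod_mul_distrib]
    exact prod_congr rfl fun j _ => Real.pow_sub_eq_rpow_mul_rpow hn (hy j) j.isLt
  have hnum : (τ.det : ℂ) ^ s = (P : ℂ) ^ s * (τ'.det : ℂ) ^ ((((n : ℂ) + 1) / (n : ℂ)) * s) := by
    have hcast : ((((n : ℝ) + 1) / n : ℝ) : ℂ) = ((n : ℂ) + 1) / n := by push_cast; rfl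
    rw [hdet, Complex.ofReal_mul_rpow_cpow (prod_nonneg fun i _ => Real.rpow_nonneg (hy i).le _)
      (hdetτ' ▸ prod_nonneg fun j _ => (pow_pos (hy j) _).le), hcast]
  have hexp : (n : ℂ) * ((((n : ℂ) + 1) / (n : ℂ)) * s) / 2 = ((n : ℂ) + 1) * s / 2 := by
    have hn₀ : (n : ℂ) ≠ 0 := by exact_mod_cast Nat.one_le_iff_ne_zero.mp hn
    field_simp
  simp only [hnum, hexp, ← tsum_mul_left, mul_div_assoc]
end
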